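/- Let X = ℤ/3ℤ with the Takasaki kei operation x ▷ y = 2y − x, and define t, s : X × X → ℤ/5ℤ by the tables (indexing rows and columns by 0, 1, 2): t = [[2,1,2],[1,2,2],[4,4,2]] and s = [[4,2,3],[2,4,3],[4,4,4]]. Then (t, s) satisfies the quandle algebra relations — each t(x,y) is invertible in ℤ/5ℤ, and for all x, y, z ∈ X: t(x,x) + s(x,x) = 1; t(x▷y,z)t(x,y) = t(x▷z,y▷z)t(x,z); t(x▷y,z)s(x,y) = s(x▷z,y▷z)t(y,z); s(x▷y,z) = s(x▷z,y▷z)s(y,z) + t(x▷z,y▷z)s(x,z) — but (t, s) is not a ℤ_K[X]-module: there exist x, y ∈ X with t(x,y)t(x▷y,y) ≠ 1. -/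

import Mathlib

/-! All relations are identities in `ℤ/5ℤ` indexed by the 27 triples of `ℤ/3ℤ`, so they are
checked by evaluation. The kei relation already fails at `(x, y) = (0, 1)`, where `0 ▷ 1 = 2`
and `t(0,1) t(2,1) = 1 · 4 = 4`. -/

/-- The Takasaki kei operation on `ℤ/3ℤ`: `x ▷ y = 2y - x`. -/
def takOp (x y : ZMod 3) : ZMod 3 := 2 * y - x

/-- The coefficient table `t = [[2,1,2],[1,2,2],[4,4,2]]` over `ℤ/5ℤ`. -/
def tCoeff (x y : ZMod 3) : ZMod 5 := ![![2,1,2],![1,2,2],![4,4,2]] (Fin.ofNat 3 x.val) (Fin.ofNat 3 y.val)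

/-- The coefficient table `s = [[4,2,3],[2,4,3],[4,4,4]]` over `ℤ/5ℤ`. -/
def sCoeff (x y : ZMod 3) : ZMod 5 := ![![4,2,3],![2,4,3],![4,4,4]] (Fin.ofNat 3 x.val) (Fin.ofNat 3 y.val)

theorem tCoeff_ne_zero (x y : ZMod 3) : tCoeff x y ≠ 0 := by
  revert x y; decide

theorem isUnit_tCoeff (x y : ZMod 3) : IsUnit (tCoeff x y) :=
  haveI : Fact (Nat.Prime 5) := ⟨Nat.prime_five⟩
  isUnit_iff_ne_zero.mpr (tCoeff_ne_zero x y)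

theorem tCoeff_self_add_sCoeff_self (x : ZMod 3) : tCoeff x x + sCoeff x x = 1 := by
  revert x; decide

theorem tCoeff_takOp_mul_tCoeff (x y z : ZMod 3) :
    tCoeff (takOp x y) z * tCoeff x y = tCoeff (takOp x z) (takOp y z) * tCoeff x z := by
  revert x y z; decide

theorem tCoeff_takOp_mul_sCoeff (x y z : ZMod 3) :
    tCoeff (takOp x y) z * sCoeff x y = sCoeff (takOp x z) (takOp y z) * tCoeff y z := by
  revert x y z; decide

theorem sCoeff_takOp (x y z : ZMod 3) :
    sCoeff (takOp x y) z =
      sCoeff (takOp x z) (takOp y z) * sCoeff y z +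
        tCoeff (takOp x z) (takOp y z) * sCoeff x z := by
  revert x y z; decide

theorem tCoeff_zero_one_mul_tCoeff_takOp_ne_one : tCoeff 0 1 * tCoeff (takOp 0 1) 1 ≠ 1 := by
  decide

/-- The tables `t`, `s` define a quandle module (`ℤ[X]`-module) structure on
`ℤ/5ℤ` over the Takasaki kei `X = ℤ/3ℤ` — each `t(x,y)` is invertible and the
four quandle algebra relations hold — but not a `ℤ_K[X]`-module: the kei
relation `t(x,y)t(x▷y,y) = 1` fails for some `x, y`. -/
theorem concrete_quandle_module_not_kei_module :
    (∀ x y : ZMod 3, IsUnit (tCoeff x y)) ∧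
    (∀ x : ZMod 3, tCoeff x x + sCoeff x x = 1) ∧
    (∀ x y z : ZMod 3,
      tCoeff (takOp x y) z * tCoeff x y = tCoeff (takOp x z) (takOp y z) * tCoeff x z) ∧
    (∀ x y z : ZMod 3,
      tCoeff (takOp x y) z * sCoeff x y = sCoeff (takOp x z) (takOp y z) * tCoeff y z) ∧
    (∀ x y z : ZMod 3,
      sCoeff (takOp x y) z =
        sCoeff (takOp x z) (takOp y z) * sCoeff y z +
          tCoeff (takOp x z) (takOp y z) * sCoeff x z) ∧
    (∃ x y : ZMod 3, tCoeff x y * tCoeff (takOp x y) y ≠ 1) :=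
  ⟨isUnit_tCoeff, tCoeff_self_add_sCoeff_self, tCoeff_takOp_mul_tCoeff, tCoeff_takOp_mul_sCoeff,
    sCoeff_takOp, ⟨0, 1, tCoeff_zero_one_mul_tCoeff_takOp_ne_one⟩⟩
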